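/- arXiv:1803.06786 — 2 statements merged into one kernel-verified Lean document; each statement's English description precedes it below -/
import Mathlib

section
/- For any real numbers x, y with 0 ≤ x ≤ 1 and 0 ≤ y ≤ 1, and any natural number n ≥ 1, we have (1 - x·y)^n ≤ 1 - x + exp(-y·n). -/
/-! Writing `1 - x y = (1 - x) · 1 + x · (1 - y)`, convexity of `t ↦ tⁿ` on `[0, ∞)` gives
`(1 - x y)ⁿ ≤ 1 - x + x (1 - y)ⁿ ≤ 1 - x + (1 - y)ⁿ`, and `1 - y ≤ exp (-y)` finishes. -/

open Real

theorem pow_one_sub_add_mul_le {t a : ℝ} (ht0 : 0 ≤ t) (ht1 : t ≤ 1) (ha : 0 ≤ a) (n : ℕ) :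
    (1 - t + t * a) ^ n ≤ 1 - t + t * a ^ n := by
  simpa using (convexOn_pow n).2 (Set.mem_Ici.mpr zero_le_one) (Set.mem_Ici.mpr ha)
    (sub_nonneg.mpr ht1) ht0 (sub_add_cancel 1 t)

theorem one_sub_pow_le_exp_neg_mul {y : ℝ} (hy : y ≤ 1) (n : ℕ) :
    (1 - y) ^ n ≤ exp (-(y * n)) :=
  calc (1 - y) ^ n ≤ exp (-y) ^ n :=
        pow_le_pow_left₀ (sub_nonneg.mpr hy) (one_sub_le_exp_neg y) n
    _ = exp (-(y * n)) := by rw [← exp_nat_mul]; ring_nf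

theorem stmt_0_general (x y : ℝ) (hx0 : 0 ≤ x) (hx1 : x ≤ 1) (hy1 : y ≤ 1)
    (n : ℕ) :
    (1 - x * y) ^ n ≤ 1 - x + Real.exp (-(y * n)) := by
  have hpow : 0 ≤ (1 - y) ^ n := pow_nonneg (sub_nonneg.mpr hy1) n
  calc (1 - x * y) ^ n = (1 - x + x * (1 - y)) ^ n := by ring
    _ ≤ 1 - x + x * (1 - y) ^ n := pow_one_sub_add_mul_le hx0 hx1 (sub_nonneg.mpr hy1) n
    _ ≤ 1 - x + (1 - y) ^ n := by gcongr; exact mul_le_of_le_one_left hpow hx1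
    _ ≤ 1 - x + exp (-(y * n)) := by gcongr; exact one_sub_pow_le_exp_neg_mul hy1 n

theorem stmt_0 (x y : ℝ) (hx0 : 0 ≤ x) (hx1 : x ≤ 1) (hy0 : 0 ≤ y) (hy1 : y ≤ 1)
    (n : ℕ) (hn : 1 ≤ n) :
    (1 - x * y) ^ n ≤ 1 - x + Real.exp (-(y * n)) :=
  stmt_0_general x y hx0 hx1 hy1 n
end

section
/- Let V be a random variable on a finite alphabet 𝒱 with distribution P_V having entropy H(V) > 0, and let 0 < α < β < 1. Then there exists a positive integer L and a subset A ⊆ 𝒱^L such that the product measure satisfies α < P_V^{⊗L}(A) ≤ β. -/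
/-!
If no atom of `P` has probability one (which positive entropy guarantees), the largest atom
probability `M` is below one, so every point of `V^L` has probability at most `M ^ L < β - α` for
`L` large. Adding the points of `V^L` one at a time, the probability climbs from `0` to `1` in steps
smaller than `β - α`, so it first exceeds `α` at a value at most `β`.
-/

open MeasureTheory

/-- Shannon entropy (in nats) of a probability measure on a finite alphabet. -/
noncomputable def shannonEntropy {V : Type*} [Fintype V] [MeasurableSpace V]
    (P : Measure V) : ℝ :=
  -∑ v : V, (P {v}).toReal * Real.log (P {v}).toReal

lemma shannonEntropy_eq_zero_of_measureReal_singleton_eq_one {V : Type*} [Fintype V]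
    [MeasurableSpace V] [MeasurableSingletonClass V] {P : Measure V} [IsProbabilityMeasure P]
    {v : V} (hv : P.real {v} = 1) : shannonEntropy P = 0 := by
  have h_other : ∀ w ≠ v, P.real {w} = 0 := fun w hw ↦ by
    have : P.real {v}ᶜ = 0 := by
      rw [measureReal_compl (measurableSet_singleton v), probReal_univ, hv, sub_self]
    exact le_antisymm (this ▸ measureReal_mono (by simpa using hw.symm)) measureReal_nonneg
  refine neg_eq_zero.2 (Finset.sum_eq_zero fun w _ ↦ ?_)
  change P.real {w} * Real.log (P.real {w}) = 0
  rcases eq_or_ne w v with rfl | hw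
  · simp [hv]
  · simp [h_other w hw]

lemma measureReal_singleton_lt_one_of_shannonEntropy_pos {V : Type*} [Fintype V]
    [MeasurableSpace V] [MeasurableSingletonClass V] {P : Measure V} [IsProbabilityMeasure P]
    (hH : 0 < shannonEntropy P) (v : V) : P.real {v} < 1 :=
  measureReal_le_one.lt_of_ne fun hv ↦
    hH.ne' (shannonEntropy_eq_zero_of_measureReal_singleton_eq_one hv)

lemma exists_finset_measureReal_mem_Ioc {X : Type*} [MeasurableSpace X]
    [MeasurableSingletonClass X] {μ : Measure X} [IsFiniteMeasure μ] {a ε : ℝ} (ha : 0 ≤ a)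
    (hε : ∀ x, μ.real {x} ≤ ε) (s : Finset X) (hs : a < μ.real s) :
    ∃ t : Finset X, μ.real t ∈ Set.Ioc a (a + ε) := by
  classical
  induction s using Finset.induction_on with
  | empty => simp at hs; linarith
  | insert x s hx ih =>
    by_cases hs' : a < μ.real s
    · exact ih hs'
    · refine ⟨insert x s, hs, ?_⟩
      rw [Finset.coe_insert, Set.insert_eq, measureReal_union (by simpa using hx) s.measurableSet]
      linarith [hε x]

lemma measureReal_pi_singleton_le_pow {V : Type*} [MeasurableSpace V] {P : Measure V}
    [IsFiniteMeasure P] {M : ℝ} (hM : ∀ v, P.real {v} ≤ M) (L : ℕ) (x : Fin L → V) :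
    (Measure.pi fun _ : Fin L ↦ P).real {x} ≤ M ^ L := by
  rw [← Set.univ_pi_singleton, measureReal_def, Measure.pi_pi, ENNReal.toReal_prod]
  calc ∏ i, P.real {x i} ≤ ∏ _i : Fin L, M :=
        Finset.prod_le_prod (fun _ _ ↦ measureReal_nonneg) fun i _ ↦ hM (x i)
    _ = M ^ L := by simp

theorem stmt_4 {V : Type*} [Fintype V] [MeasurableSpace V] [MeasurableSingletonClass V]
    (P : Measure V) [IsProbabilityMeasure P] (hH : 0 < shannonEntropy P)
    (α β : ℝ) (hα : 0 < α) (hαβ : α < β) (hβ : β < 1) :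
    ∃ L : ℕ, 0 < L ∧ ∃ A : Set (Fin L → V), MeasurableSet A ∧
      α < ((Measure.pi fun _ : Fin L => P) A).toReal ∧
      ((Measure.pi fun _ : Fin L => P) A).toReal ≤ β := by
  have := nonempty_of_isProbabilityMeasure P
  obtain ⟨vmax, hvmax⟩ := Finite.exists_max fun v ↦ P.real {v}
  obtain ⟨L, hL⟩ := exists_pow_lt_of_lt_one (sub_pos.2 hαβ)
    (measureReal_singleton_lt_one_of_shannonEntropy_pos hH vmax)
  have hL_pos : 0 < L := Nat.pos_of_ne_zero fun h ↦ by
    subst h; linarith [pow_zero (P.real {vmax})]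
  have h_univ : α < (Measure.pi fun _ : Fin L ↦ P).real (Finset.univ : Finset (Fin L → V)) := by
    simpa using hαβ.trans hβ
  obtain ⟨A, hαA, hAβ⟩ := exists_finset_measureReal_mem_Ioc hα.le
    (measureReal_pi_singleton_le_pow hvmax L) Finset.univ h_univ
  exact ⟨L, hL_pos, A, A.measurableSet, hαA, hAβ.trans (by linarith)⟩
end
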